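/- In the setting of the zero-sum sub-game at a stopping time σ, for every stopping strategy (ρ₀,ρ₁) ∈ 𝔗_σ one has E[U(ρ[τ^ε_σ], τ^ε_σ[ρ]) | 𝓕_σ] ≤ v_σ + 4ε almost surely, where τ^ε_σ := (τ_σ^ε, τ_h) and ρ = (ρ₀,ρ₁). -/

import Mathlib

/-!
Common setup for "On the non-zero-sum stopping game ending at the maximum of the stopping
strategies".  Time is indexed by `[0,∞] = ℝ≥0∞`.  Since `Ω` is at most countable and `ℙ`
charges every point, essential suprema/infima over families of stopping times coincide with
the pointwise ones, which is how they are formalized below.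
-/

open MeasureTheory Filter Set
open scoped ENNReal Topology

noncomputable section

namespace StoppingGames

variable {Ω : Type*} [mΩ : MeasurableSpace Ω]

/-- `|a - b|` on `[0,∞]`, via truncated subtraction. -/
def dd (a b : ℝ≥0∞) : ℝ≥0∞ := (a - b) + (b - a)

/-- `𝒯`, the set of stopping times with values in `[0,∞]`. -/
def ST (𝓕 : Filtration ℝ≥0∞ mΩ) : Set (Ω → ℝ≥0∞) := {τ | IsStoppingTime 𝓕 (fun ω => (τ ω : WithTop ℝ≥0∞))}

/-- `𝒯_σ`, the stopping times no less than `σ`. -/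
def STge (𝓕 : Filtration ℝ≥0∞ mΩ) (σ : Ω → ℝ≥0∞) : Set (Ω → ℝ≥0∞) :=
  {τ | IsStoppingTime 𝓕 (fun ω => (τ ω : WithTop ℝ≥0∞)) ∧ ∀ ω, σ ω ≤ τ ω}

/-- `𝒯_{t+}`, the stopping times strictly greater than `t`. -/
def STgt (𝓕 : Filtration ℝ≥0∞ mΩ) (t : ℝ≥0∞) : Set (Ω → ℝ≥0∞) :=
  {τ | IsStoppingTime 𝓕 (fun ω => (τ ω : WithTop ℝ≥0∞)) ∧ ∀ ω, t < τ ω}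

/-- The class `𝕋` of jointly measurable maps `φ : [0,∞] × Ω → [0,∞]` with
`φ(t,·) ∈ 𝒯_{t+}` for every finite `t`. -/
def IsTT (𝓕 : Filtration ℝ≥0∞ mΩ) (φ : ℝ≥0∞ → Ω → ℝ≥0∞) : Prop :=
  Measurable (Function.uncurry φ) ∧ ∀ t : ℝ≥0∞, t ≠ ∞ → φ t ∈ STgt 𝓕 t

/-- A stopping strategy `ρ = (ρ₀, ρ₁) ∈ 𝔗`. -/
def IsStrategy (𝓕 : Filtration ℝ≥0∞ mΩ) (ρ : (Ω → ℝ≥0∞) × (ℝ≥0∞ → Ω → ℝ≥0∞)) : Prop :=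
  IsStoppingTime 𝓕 (fun ω => (ρ.1 ω : WithTop ℝ≥0∞)) ∧ IsTT 𝓕 ρ.2

/-- `𝔗_σ`, the stopping strategies whose first component is `≥ σ`. -/
def IsStrategyGe (𝓕 : Filtration ℝ≥0∞ mΩ) (σ : Ω → ℝ≥0∞)
    (ρ : (Ω → ℝ≥0∞) × (ℝ≥0∞ → Ω → ℝ≥0∞)) : Prop :=
  IsStrategy 𝓕 ρ ∧ ∀ ω, σ ω ≤ ρ.1 ω

/-- `ρ[τ] = ρ₀ 1_{ρ₀ ≤ τ₀} + ρ₁(τ₀) 1_{ρ₀ > τ₀}`. -/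
def play (ρ τ : (Ω → ℝ≥0∞) × (ℝ≥0∞ → Ω → ℝ≥0∞)) : Ω → ℝ≥0∞ := fun ω =>
  if ρ.1 ω ≤ τ.1 ω then ρ.1 ω else ρ.2 (τ.1 ω) ω

/-- `u(ρ,τ) = E[U(ρ[τ], τ[ρ])]`. -/
def payoff (μ : Measure Ω) (U : ℝ≥0∞ → ℝ≥0∞ → Ω → ℝ)
    (ρ τ : (Ω → ℝ≥0∞) × (ℝ≥0∞ → Ω → ℝ≥0∞)) : ℝ :=
  ∫ ω, U (play ρ τ ω) (play τ ρ ω) ω ∂μ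

/-- `u_σ(ρ,τ) = E[U(ρ[τ], τ[ρ]) | m]`. -/
def condPayoff (μ : Measure Ω) (m : MeasurableSpace Ω) (U : ℝ≥0∞ → ℝ≥0∞ → Ω → ℝ)
    (ρ τ : (Ω → ℝ≥0∞) × (ℝ≥0∞ → Ω → ℝ≥0∞)) : Ω → ℝ :=
  μ[fun ω => U (play ρ τ ω) (play τ ρ ω) ω | m]

/-- The grid point `n·h ∈ [0,∞]`. -/
def grid (h : ℝ) (n : ℕ) : ℝ≥0∞ := ENNReal.ofReal (n * h)

/-- `⌊t/h⌋ + 1`. -/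
def gridIdx (h : ℝ) (t : ℝ≥0∞) : ℕ := ⌊t.toReal / h⌋₊ + 1

/-- `ρ_h(t) := ρ̄((⌊t/h⌋+1)h)` for finite `t`, and `ρ_h(∞) := ∞`. -/
def gridStrat (h : ℝ) (bar : ℕ → Ω → ℝ≥0∞) : ℝ≥0∞ → Ω → ℝ≥0∞ := fun t ω =>
  if t = ∞ then ∞ else bar (gridIdx h t) ω

/-- Evaluation `φ(σ) : ω ↦ φ(σ(ω), ω)` of a time-indexed family along a random time. -/
def evalAt (φ : ℝ≥0∞ → Ω → ℝ≥0∞) (σ : Ω → ℝ≥0∞) : Ω → ℝ≥0∞ := fun ω => φ (σ ω) ω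

/-- `X_t = ess inf_{σ ∈ 𝒯_t} E[U(t,σ) | 𝓕_t]` (pointwise infimum, which coincides with the
essential one since `Ω` is countable and every point is charged). -/
def X1v (μ : Measure Ω) (𝓕 : Filtration ℝ≥0∞ mΩ) (U : ℝ≥0∞ → ℝ≥0∞ → Ω → ℝ)
    (t : ℝ≥0∞) (ω : Ω) : ℝ :=
  ⨅ σ : STge 𝓕 (fun _ => t), (μ[fun ω' => U t (σ.1 ω') ω' | 𝓕 t]) ω

/-- `Y_t = ess sup_{σ ∈ 𝒯_t} E[U(σ,t) | 𝓕_t]`. -/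
def Y1v (μ : Measure Ω) (𝓕 : Filtration ℝ≥0∞ mΩ) (U : ℝ≥0∞ → ℝ≥0∞ → Ω → ℝ)
    (t : ℝ≥0∞) (ω : Ω) : ℝ :=
  ⨆ σ : STge 𝓕 (fun _ => t), (μ[fun ω' => U (σ.1 ω') t ω' | 𝓕 t]) ω

/-- Player 2: `X²_t = ess sup_{σ ∈ 𝒯_t} E[U²(t,σ) | 𝓕_t]`. -/
def X2v (μ : Measure Ω) (𝓕 : Filtration ℝ≥0∞ mΩ) (U : ℝ≥0∞ → ℝ≥0∞ → Ω → ℝ)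
    (t : ℝ≥0∞) (ω : Ω) : ℝ :=
  ⨆ σ : STge 𝓕 (fun _ => t), (μ[fun ω' => U t (σ.1 ω') ω' | 𝓕 t]) ω

/-- Player 2: `Y²_t = ess inf_{σ ∈ 𝒯_t} E[U²(σ,t) | 𝓕_t]`. -/
def Y2v (μ : Measure Ω) (𝓕 : Filtration ℝ≥0∞ mΩ) (U : ℝ≥0∞ → ℝ≥0∞ → Ω → ℝ)
    (t : ℝ≥0∞) (ω : Ω) : ℝ :=
  ⨅ σ : STge 𝓕 (fun _ => t), (μ[fun ω' => U (σ.1 ω') t ω' | 𝓕 t]) ω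

/-- `Z_t = U(t,t)`. -/
def Zv (U : ℝ≥0∞ → ℝ≥0∞ → Ω → ℝ) : ℝ≥0∞ → Ω → ℝ := fun t ω => U t t ω

/-- `X_{ρ₀} 1_{ρ₀ < τ₀} + Y_{τ₀} 1_{ρ₀ > τ₀} + Z_{ρ₀} 1_{ρ₀ = τ₀}`. -/
def dynkinKernel (X Y Z : ℝ≥0∞ → Ω → ℝ) (ρ₀ τ₀ : Ω → ℝ≥0∞) (ω : Ω) : ℝ :=
  if ρ₀ ω < τ₀ ω then X (ρ₀ ω) ω else if τ₀ ω < ρ₀ ω then Y (τ₀ ω) ω else Z (ρ₀ ω) ω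

/-- The Dynkin-game payoff `V(ρ₀,τ₀)`. -/
def dynkinV (μ : Measure Ω) (X Y Z : ℝ≥0∞ → Ω → ℝ) (ρ₀ τ₀ : Ω → ℝ≥0∞) : ℝ :=
  ∫ ω, dynkinKernel X Y Z ρ₀ τ₀ ω ∂μ

/-- The conditional Dynkin-game payoff. -/
def condDynkin (μ : Measure Ω) (m : MeasurableSpace Ω) (X Y Z : ℝ≥0∞ → Ω → ℝ)
    (ρ₀ τ₀ : Ω → ℝ≥0∞) : Ω → ℝ :=
  μ[fun ω => dynkinKernel X Y Z ρ₀ τ₀ ω | m]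

/-- `v_t¹`, the (sup-inf) value of the conditional Dynkin game `G_t¹` with payoffs
`(X¹, Y¹, Z¹)` built from `U¹`. -/
def v1v (μ : Measure Ω) (𝓕 : Filtration ℝ≥0∞ mΩ) (U : ℝ≥0∞ → ℝ≥0∞ → Ω → ℝ)
    (t : ℝ≥0∞) (ω : Ω) : ℝ :=
  ⨆ ρ₀ : STge 𝓕 (fun _ => t), ⨅ τ₀ : STge 𝓕 (fun _ => t),
    condDynkin μ (𝓕 t) (X1v μ 𝓕 U) (Y1v μ 𝓕 U) (Zv U) ρ₀.1 τ₀.1 ω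

/-- `v_t²`, the (inf-sup) value of the conditional Dynkin game `G_t²` with payoffs
`(X², Y², Z²)` built from `U²`. -/
def v2v (μ : Measure Ω) (𝓕 : Filtration ℝ≥0∞ mΩ) (U : ℝ≥0∞ → ℝ≥0∞ → Ω → ℝ)
    (t : ℝ≥0∞) (ω : Ω) : ℝ :=
  ⨅ ρ₀ : STge 𝓕 (fun _ => t), ⨆ τ₀ : STge 𝓕 (fun _ => t),
    condDynkin μ (𝓕 t) (X2v μ 𝓕 U) (Y2v μ 𝓕 U) (Zv U) ρ₀.1 τ₀.1 ω

/-- `W_t¹ = E[U¹(t, τ_h²(t)) | 𝓕_t]`. -/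
def W1v (μ : Measure Ω) (𝓕 : Filtration ℝ≥0∞ mΩ) (U : ℝ≥0∞ → ℝ≥0∞ → Ω → ℝ)
    (h : ℝ) (bar : ℕ → Ω → ℝ≥0∞) (t : ℝ≥0∞) (ω : Ω) : ℝ :=
  (μ[fun ω' => U t (gridStrat h bar t ω') ω' | 𝓕 t]) ω

/-- `W_t² = E[U²(ρ_h¹(t), t) | 𝓕_t]`. -/
def W2v (μ : Measure Ω) (𝓕 : Filtration ℝ≥0∞ mΩ) (U : ℝ≥0∞ → ℝ≥0∞ → Ω → ℝ)
    (h : ℝ) (bar : ℕ → Ω → ℝ≥0∞) (t : ℝ≥0∞) (ω : Ω) : ℝ :=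
  (μ[fun ω' => U (gridStrat h bar t ω') t ω' | 𝓕 t]) ω

/-- `μ₁ = inf {t ≥ 0 : v_t¹ ≤ W_t¹ + ε}`. -/
def mu1T (μ : Measure Ω) (𝓕 : Filtration ℝ≥0∞ mΩ) (U : ℝ≥0∞ → ℝ≥0∞ → Ω → ℝ)
    (h ε : ℝ) (bar : ℕ → Ω → ℝ≥0∞) : Ω → ℝ≥0∞ := fun ω =>
  sInf {t | v1v μ 𝓕 U t ω ≤ W1v μ 𝓕 U h bar t ω + ε}

/-- `μ₂ = inf {t ≥ 0 : v_t² ≤ W_t² + ε}`. -/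
def mu2T (μ : Measure Ω) (𝓕 : Filtration ℝ≥0∞ mΩ) (U : ℝ≥0∞ → ℝ≥0∞ → Ω → ℝ)
    (h ε : ℝ) (bar : ℕ → Ω → ℝ≥0∞) : Ω → ℝ≥0∞ := fun ω =>
  sInf {t | v2v μ 𝓕 U t ω ≤ W2v μ 𝓕 U h bar t ω + ε}

/-- `ρ̄(nh)` is a family of `ε`-optimizers for `Y¹_{nh}`:
`E[U(ρ̄(nh), nh) | 𝓕_{nh}] ≥ Y_{nh} − ε`. -/
def IsOptRho1 (μ : Measure Ω) (𝓕 : Filtration ℝ≥0∞ mΩ) (U : ℝ≥0∞ → ℝ≥0∞ → Ω → ℝ)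
    (ε h : ℝ) (bar : ℕ → Ω → ℝ≥0∞) : Prop :=
  ∀ n : ℕ, bar n ∈ STge 𝓕 (fun _ => grid h n) ∧
    ∀ᵐ ω ∂μ, Y1v μ 𝓕 U (grid h n) ω - ε ≤
      (μ[fun ω' => U (bar n ω') (grid h n) ω' | 𝓕 (grid h n)]) ω

/-- `τ̄(nh)` is a family of `ε`-optimizers for `X¹_{nh}`:
`E[U(nh, τ̄(nh)) | 𝓕_{nh}] ≤ X_{nh} + ε`. -/
def IsOptTau1 (μ : Measure Ω) (𝓕 : Filtration ℝ≥0∞ mΩ) (U : ℝ≥0∞ → ℝ≥0∞ → Ω → ℝ)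
    (ε h : ℝ) (bar : ℕ → Ω → ℝ≥0∞) : Prop :=
  ∀ n : ℕ, bar n ∈ STge 𝓕 (fun _ => grid h n) ∧
    ∀ᵐ ω ∂μ, (μ[fun ω' => U (grid h n) (bar n ω') ω' | 𝓕 (grid h n)]) ω ≤
      X1v μ 𝓕 U (grid h n) ω + ε

/-- `ρ̄²(nh)` is a family of `ε`-optimizers for `Y²_{nh}` (an essential infimum). -/
def IsOptRho2 (μ : Measure Ω) (𝓕 : Filtration ℝ≥0∞ mΩ) (U : ℝ≥0∞ → ℝ≥0∞ → Ω → ℝ)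
    (ε h : ℝ) (bar : ℕ → Ω → ℝ≥0∞) : Prop :=
  ∀ n : ℕ, bar n ∈ STge 𝓕 (fun _ => grid h n) ∧
    ∀ᵐ ω ∂μ, (μ[fun ω' => U (bar n ω') (grid h n) ω' | 𝓕 (grid h n)]) ω ≤
      Y2v μ 𝓕 U (grid h n) ω + ε

/-- `τ̄²(nh)` is a family of `ε`-optimizers for `X²_{nh}` (an essential supremum). -/
def IsOptTau2 (μ : Measure Ω) (𝓕 : Filtration ℝ≥0∞ mΩ) (U : ℝ≥0∞ → ℝ≥0∞ → Ω → ℝ)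
    (ε h : ℝ) (bar : ℕ → Ω → ℝ≥0∞) : Prop :=
  ∀ n : ℕ, bar n ∈ STge 𝓕 (fun _ => grid h n) ∧
    ∀ᵐ ω ∂μ, X2v μ 𝓕 U (grid h n) ω - ε ≤
      (μ[fun ω' => U (grid h n) (bar n ω') ω' | 𝓕 (grid h n)]) ω

/-- The standing assumptions on the filtered probability space: `ℙ` charges every point of the
(countable) `Ω`, the filtration is right continuous (usual conditions; completeness is automatic
since null sets are empty), and `𝓕 = 𝓕_∞ = ⋃_{t<∞} 𝓕_t`. -/
def UsualSetup (μ : Measure Ω) (𝓕 : Filtration ℝ≥0∞ mΩ) : Prop :=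
  (∀ ω : Ω, μ {ω} ≠ 0) ∧
  (∀ t : ℝ≥0∞, (𝓕 t : MeasurableSpace Ω) = ⨅ s ∈ Ioi t, (𝓕 s : MeasurableSpace Ω)) ∧
  ((𝓕 ∞ : MeasurableSpace Ω) = mΩ) ∧
  ((⨆ t ∈ Iio (∞ : ℝ≥0∞), (𝓕 t : MeasurableSpace Ω)) = mΩ)

/-- The standing assumptions on a payoff `U`: boundedness, `𝓕_{s∨t}`-measurability of `U(s,t)`,
and the uniform-continuity modulus `r` (bounded, nondecreasing, `r(0+) = r(0) = 0`).  Note that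
the modulus condition, being imposed on all of `[0,∞]`, encodes that the values at `∞` are the
corresponding limits. -/
def PayoffAssumption (𝓕 : Filtration ℝ≥0∞ mΩ) (U : ℝ≥0∞ → ℝ≥0∞ → Ω → ℝ)
    (r : ℝ≥0∞ → ℝ) : Prop :=
  (∃ M : ℝ, ∀ s t ω, |U s t ω| ≤ M) ∧
  (∀ s t : ℝ≥0∞, Measurable[𝓕 (s ⊔ t)] (U s t)) ∧
  Monotone r ∧ (∀ x, 0 ≤ r x) ∧ (∃ C : ℝ, ∀ x, r x ≤ C) ∧ r 0 = 0 ∧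
  Tendsto r (𝓝[>] (0 : ℝ≥0∞)) (𝓝 (0 : ℝ)) ∧
  (∀ s t s' t' : ℝ≥0∞, ∀ ω, |U s t ω - U s' t' ω| ≤ r (dd s s' + dd t t'))

/-- The values of `U` at `∞` are the limits of the values at finite times. -/
def LimitsAtInfty (U : ℝ≥0∞ → ℝ≥0∞ → Ω → ℝ) : Prop :=
  (∀ s ω, Tendsto (fun b => U s b ω) (𝓝[<] (∞ : ℝ≥0∞)) (𝓝 (U s ∞ ω))) ∧
  (∀ t ω, Tendsto (fun a => U a t ω) (𝓝[<] (∞ : ℝ≥0∞)) (𝓝 (U ∞ t ω))) ∧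
  (∀ ω, Tendsto (fun p : ℝ≥0∞ × ℝ≥0∞ => U p.1 p.2 ω)
    ((𝓝[<] (∞ : ℝ≥0∞)) ×ˢ (𝓝[<] (∞ : ℝ≥0∞))) (𝓝 (U ∞ ∞ ω)))

/-- `ess inf_{σ ∈ 𝒯_v} E[U(s,σ) | 𝓕_v]` for a stopping time `v`. -/
def XatST (μ : Measure Ω) (𝓕 : Filtration ℝ≥0∞ mΩ) (U : ℝ≥0∞ → ℝ≥0∞ → Ω → ℝ)
    {v : Ω → ℝ≥0∞} (hv : IsStoppingTime 𝓕 (fun ω => (v ω : WithTop ℝ≥0∞))) (s : ℝ≥0∞) (ω : Ω) : ℝ :=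
  ⨅ σ : STge 𝓕 v, (μ[fun ω' => U s (σ.1 ω') ω' | hv.measurableSpace]) ω

/-- `X̃_v(s) = ess inf_{σ ∈ 𝒯_v} E[U(s,σ) | 𝓕_v]` for a deterministic time `v`. -/
def Xat (μ : Measure Ω) (𝓕 : Filtration ℝ≥0∞ mΩ) (U : ℝ≥0∞ → ℝ≥0∞ → Ω → ℝ)
    (v s : ℝ≥0∞) (ω : Ω) : ℝ :=
  ⨅ σ : STge 𝓕 (fun _ => v), (μ[fun ω' => U s (σ.1 ω') ω' | 𝓕 v]) ω

/-- `ρ₀* = μ₁ 1_{μ₁ ≤ μ₂} + ρ²_{μ₂+δ} 1_{μ₁ > μ₂}`. -/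
def rhoStar0 (m1 m2 rsad2 : Ω → ℝ≥0∞) : Ω → ℝ≥0∞ := fun ω =>
  if m1 ω ≤ m2 ω then m1 ω else rsad2 ω

/-- `ρ₁*(t) = ρ_h²(t)` if `t ≥ μ₁ ∧ μ₂ + δ` and `μ₁ > μ₂`, else `ρ_h¹(t)`. -/
def rhoStar1 (m1 m2 : Ω → ℝ≥0∞) (δ : ℝ) (φ1 φ2 : ℝ≥0∞ → Ω → ℝ≥0∞) :
    ℝ≥0∞ → Ω → ℝ≥0∞ := fun t ω =>
  if (m1 ω ⊓ m2 ω) + ENNReal.ofReal δ ≤ t ∧ m2 ω < m1 ω then φ2 t ω else φ1 t ω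

/-- `τ₀* = τ¹_{μ₁+δ} 1_{μ₁ ≤ μ₂} + μ₂ 1_{μ₁ > μ₂}`. -/
def tauStar0 (m1 m2 tsad1 : Ω → ℝ≥0∞) : Ω → ℝ≥0∞ := fun ω =>
  if m1 ω ≤ m2 ω then tsad1 ω else m2 ω

/-- `τ₁*(t) = τ_h¹(t)` if `t ≥ μ₁ ∧ μ₂ + δ` and `μ₁ ≤ μ₂`, else `τ_h²(t)`. -/
def tauStar1 (m1 m2 : Ω → ℝ≥0∞) (δ : ℝ) (ψ1 ψ2 : ℝ≥0∞ → Ω → ℝ≥0∞) :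
    ℝ≥0∞ → Ω → ℝ≥0∞ := fun t ω =>
  if (m1 ω ⊓ m2 ω) + ENNReal.ofReal δ ≤ t ∧ m1 ω ≤ m2 ω then ψ1 t ω else ψ2 t ω

end StoppingGames

/-!
Splitting according to who stops first, the payoff of `ρ` against `(τ_σ^ε, τ_h)` is the kernel of
the Dynkin game with `X`, `Y` replaced by `U(s, τ_h(s))` and `U(ρ₁(t), t)`. Conditioning on
`𝓕_{ρ₀}` on `{ρ₀ < τ_σ^ε}` and on `𝓕_{τ_σ^ε}` on `{τ_σ^ε < ρ₀}` (towers over `𝓕_σ`), the first is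
at most `X_{ρ₀} + 2ε` by the choice of `h`, and the second at most `Y_{τ_σ^ε}` because
`ρ₁(t) ∈ 𝒯_t`. Hence the payoff is at most the Dynkin payoff of `(ρ₀, τ_σ^ε)` plus `2ε`, and the
`ε`-saddle property of `(ρ_σ^ε, τ_σ^ε)` costs another `2ε`.
-/

section General

variable {Ω β γ ι κ : Type*}

theorem abs_ciInf_le_of_forall_abs_le [Nonempty ι] {f : ι → ℝ} {M : ℝ} (h : ∀ i, |f i| ≤ M) :
    |⨅ i, f i| ≤ M := by
  obtain ⟨i⟩ := ‹Nonempty ι›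
  have hbdd : BddBelow (range f) := ⟨-M, by rintro _ ⟨j, rfl⟩; exact (abs_le.1 (h j)).1⟩
  exact abs_le.2 ⟨le_ciInf fun j => (abs_le.1 (h j)).1, (ciInf_le hbdd i).trans (abs_le.1 (h i)).2⟩

theorem abs_ciSup_le_of_forall_abs_le [Nonempty ι] {f : ι → ℝ} {M : ℝ} (h : ∀ i, |f i| ≤ M) :
    |⨆ i, f i| ≤ M := by
  obtain ⟨i⟩ := ‹Nonempty ι›
  have hbdd : BddAbove (range f) := ⟨M, by rintro _ ⟨j, rfl⟩; exact (abs_le.1 (h j)).2⟩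
  exact abs_le.2 ⟨(abs_le.1 (h i)).1.trans (le_ciSup hbdd i), ciSup_le fun j => (abs_le.1 (h j)).2⟩

theorem le_ciSup_ciInf_add_of_saddle {V : ι → κ → ℝ} {M ε : ℝ} (hV : ∀ i j, |V i j| ≤ M)
    {a : ι} {b : κ} (hmax : ∀ i, V i b - ε ≤ V a b) (hmin : ∀ j, V a b ≤ V a j + ε) (i : ι) :
    V i b ≤ (⨆ i, ⨅ j, V i j) + 2 * ε := by
  have : Nonempty κ := ⟨b⟩
  have hbdd : ∀ i, BddBelow (range (V i)) := fun i =>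
    ⟨-M, by rintro _ ⟨j, rfl⟩; exact (abs_le.1 (hV i j)).1⟩
  have hrow : V a b - ε ≤ ⨅ j, V a j := le_ciInf fun j => by linarith [hmin j]
  have hval : (⨅ j, V a j) ≤ ⨆ i, ⨅ j, V i j :=
    le_ciSup ⟨M, by rintro _ ⟨i, rfl⟩; exact (ciInf_le (hbdd i) b).trans (abs_le.1 (hV i b)).2⟩ a
  linarith [hmax i]

theorem Measurable.eq_of_mem_measurableAtom {m : MeasurableSpace Ω} [MeasurableSpace β]
    [MeasurableSingletonClass β] {g : Ω → β} (hg : Measurable[m] g) {ω ω' : Ω}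
    (h : ω' ∈ @measurableAtom Ω m ω) : g ω' = g ω :=
  mem_of_mem_measurableAtom h (hg (measurableSet_singleton (g ω))) rfl

section Countable

variable [Countable Ω] {m : MeasurableSpace Ω} [MeasurableSpace β]

theorem measurable_of_forall_mem_measurableAtom {g : Ω → β}
    (hg : ∀ ω, ∀ ω' ∈ @measurableAtom Ω m ω, g ω' = g ω) : Measurable[m] g := by
  intro B _
  have hB : g ⁻¹' B = ⋃ ω ∈ g ⁻¹' B, @measurableAtom Ω m ω := by
    ext ω'
    simp only [mem_preimage, mem_iUnion, exists_prop]
    refine ⟨fun h => ⟨ω', h, @mem_measurableAtom_self Ω m ω'⟩, ?_⟩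
    rintro ⟨ω, hω, hω'⟩
    rwa [hg ω ω' hω']
  rw [hB]
  exact .biUnion (to_countable _) fun ω _ => @MeasurableSet.measurableAtom_of_countable Ω m _ ω

variable [MeasurableSingletonClass β]

theorem measurable_iInf_of_countable_domain [InfSet β] {f : ι → Ω → β}
    (hf : ∀ i, Measurable[m] (f i)) : Measurable[m] fun ω => ⨅ i, f i ω :=
  measurable_of_forall_mem_measurableAtom fun _ _ h =>
    iInf_congr fun i => (hf i).eq_of_mem_measurableAtom h

theorem measurable_iSup_of_countable_domain [SupSet β] {f : ι → Ω → β}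
    (hf : ∀ i, Measurable[m] (f i)) : Measurable[m] fun ω => ⨆ i, f i ω :=
  measurable_of_forall_mem_measurableAtom fun _ _ h =>
    iSup_congr fun i => (hf i).eq_of_mem_measurableAtom h

theorem measurable_apply_of_countable_domain [MeasurableSpace γ] [MeasurableSingletonClass γ]
    {p : Ω → γ} (hp : Measurable[m] p) {F : γ → Ω → β} (hF : ∀ c, Measurable[m] (F c)) :
    Measurable[m] fun ω => F (p ω) ω :=
  measurable_of_forall_mem_measurableAtom fun _ _ h => by
    rw [hp.eq_of_mem_measurableAtom h, (hF _).eq_of_mem_measurableAtom h]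

end Countable

variable [mΩ : MeasurableSpace Ω]

theorem forall_of_ae_of_measure_singleton_ne_zero {μ : Measure Ω} (hμ : ∀ ω, μ {ω} ≠ 0)
    {p : Ω → Prop} (h : ∀ᵐ ω ∂μ, p ω) (ω : Ω) : p ω := by
  by_contra hp
  exact hμ ω (measure_mono_null (singleton_subset_iff.2 hp) (ae_iff.1 h))

theorem abs_condExp_le_of_forall_abs_le {μ : Measure Ω} (hμ : ∀ ω, μ {ω} ≠ 0)
    {m : MeasurableSpace Ω} {f : Ω → ℝ} {M : ℝ} (hf : ∀ ω, |f ω| ≤ M) (ω : Ω) :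
    |μ[f | m] ω| ≤ M :=
  forall_of_ae_of_measure_singleton_ne_zero (mΩ := mΩ) hμ
    (ae_bdd_abs_condExp_of_ae_bdd_abs (m := m) (ae_of_all _ hf)) ω

theorem condExp_ae_eq_restrict_of_eqOn {μ : Measure Ω} [IsFiniteMeasure μ]
    {m : MeasurableSpace Ω} (hm : m ≤ mΩ) {s : Set Ω} (hs : MeasurableSet[m] s) {f g : Ω → ℝ}
    (hf : Integrable f μ) (hg : Integrable g μ) (hfg : EqOn f g s) :
    μ[f | m] =ᵐ[μ.restrict s] μ[g | m] := by
  have hzero : μ[f - g | m] =ᵐ[μ.restrict s] 0 :=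
    condExp_ae_eq_restrict_zero hs
      ((ae_restrict_mem (hm s hs)).mono fun ω hω => sub_eq_zero.2 (hfg hω))
  filter_upwards [hzero, ae_restrict_of_ae (condExp_sub hf hg m)] with ω h0 hsub
  rw [hsub, Pi.zero_apply, Pi.sub_apply, sub_eq_zero] at h0
  exact h0

theorem condExp_indicator_ae_le {μ : Measure Ω} [IsFiniteMeasure μ] {m m' : MeasurableSpace Ω}
    (hmm' : m ≤ m') (hm' : m' ≤ mΩ) {s : Set Ω} (hs : MeasurableSet[m'] s) {f g : Ω → ℝ}
    (hf : Integrable f μ) (hg : Integrable g μ) (hfg : ∀ᵐ ω ∂μ, ω ∈ s → μ[f | m'] ω ≤ g ω) :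
    μ[s.indicator f | m] ≤ᵐ[μ] μ[s.indicator g | m] := by
  have hle : s.indicator (μ[f | m']) ≤ᵐ[μ] s.indicator g := by
    filter_upwards [hfg] with ω hω
    by_cases hωs : ω ∈ s
    · simp only [indicator_of_mem hωs, hω hωs]
    · simp only [indicator_of_notMem hωs, le_refl]
  filter_upwards [(condExp_condExp_of_le (f := s.indicator f) hmm' hm').symm,
    condExp_congr_ae (m := m) (condExp_indicator hf hs),
    condExp_mono (m := m) (integrable_condExp.indicator (hm' s hs)) (hg.indicator (hm' s hs)) hle]
    with ω h1 h2 h3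
  rw [h1, h2]
  exact h3

end General

namespace StoppingGames

variable {Ω : Type*}

theorem dynkinKernel_eq_indicator (X Y Z : ℝ≥0∞ → Ω → ℝ) (ρ₀ τ₀ : Ω → ℝ≥0∞) :
    dynkinKernel X Y Z ρ₀ τ₀ = {ω | ρ₀ ω < τ₀ ω}.indicator (fun ω => X (ρ₀ ω) ω)
      + {ω | τ₀ ω < ρ₀ ω}.indicator (fun ω => Y (τ₀ ω) ω)
      + {ω | ρ₀ ω = τ₀ ω}.indicator (fun ω => Z (ρ₀ ω) ω) := by
  funext ω
  rcases lt_trichotomy (ρ₀ ω) (τ₀ ω) with h | h | h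
  · simp [dynkinKernel, h, h.ne, h.not_gt]
  · simp [dynkinKernel, h]
  · simp [dynkinKernel, h, h.ne', h.not_gt]

theorem U_play_eq_dynkinKernel (U : ℝ≥0∞ → ℝ≥0∞ → Ω → ℝ)
    (ρ τ : (Ω → ℝ≥0∞) × (ℝ≥0∞ → Ω → ℝ≥0∞)) :
    (fun ω => U (play ρ τ ω) (play τ ρ ω) ω) = dynkinKernel (fun s ω => U s (τ.2 s ω) ω)
      (fun t ω => U (ρ.2 t ω) t ω) (Zv U) ρ.1 τ.1 := by
  funext ω
  rcases lt_trichotomy (ρ.1 ω) (τ.1 ω) with h | h | h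
  · simp [play, dynkinKernel, h, h.le, h.not_ge]
  · simp [play, dynkinKernel, Zv, h]
  · simp [play, dynkinKernel, h, h.le, h.not_ge]

theorem abs_dynkinKernel_le {X Y Z : ℝ≥0∞ → Ω → ℝ} {M : ℝ} (hX : ∀ t ω, |X t ω| ≤ M)
    (hY : ∀ t ω, |Y t ω| ≤ M) (hZ : ∀ t ω, |Z t ω| ≤ M) (ρ₀ τ₀ : Ω → ℝ≥0∞) (ω : Ω) :
    |dynkinKernel X Y Z ρ₀ τ₀ ω| ≤ M := by
  unfold dynkinKernel
  split_ifs
  exacts [hX _ _, hY _ _, hZ _ _]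

theorem dynkinKernel_add_const_le (X Y Z : ℝ≥0∞ → Ω → ℝ) {δ : ℝ} (hδ : 0 ≤ δ)
    (ρ₀ τ₀ : Ω → ℝ≥0∞) (ω : Ω) :
    dynkinKernel (fun t ω => X t ω + δ) Y Z ρ₀ τ₀ ω ≤ dynkinKernel X Y Z ρ₀ τ₀ ω + δ := by
  unfold dynkinKernel
  split_ifs <;> linarith

variable [mΩ : MeasurableSpace Ω]

instance (𝓕 : Filtration ℝ≥0∞ mΩ) (σ : Ω → ℝ≥0∞) : Nonempty (STge 𝓕 σ) :=
  ⟨⟨fun _ => ∞, isStoppingTime_const 𝓕 ∞, fun _ => le_top⟩⟩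

theorem measurable_of_isStoppingTime {𝓕 : Filtration ℝ≥0∞ mΩ} {τ : Ω → ℝ≥0∞}
    (hτ : IsStoppingTime 𝓕 fun ω => (τ ω : WithTop ℝ≥0∞)) : Measurable τ :=
  measurable_of_Iic fun t => by
    simpa only [preimage, mem_Iic, WithTop.coe_le_coe] using 𝓕.le t _ (hτ t)

theorem measurableSet_lt_of_isStoppingTime {𝓕 : Filtration ℝ≥0∞ mΩ} {ρ₀ τ₀ : Ω → ℝ≥0∞}
    (hρ₀ : IsStoppingTime 𝓕 fun ω => (ρ₀ ω : WithTop ℝ≥0∞))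
    (hτ₀ : IsStoppingTime 𝓕 fun ω => (τ₀ ω : WithTop ℝ≥0∞)) :
    MeasurableSet[hρ₀.measurableSpace] {ω | ρ₀ ω < τ₀ ω} := by
  simpa only [compl_ofPred, not_le, WithTop.coe_le_coe] using
    (hτ₀.measurableSet_stopping_time_le hρ₀).compl

theorem measurable_gridStrat {h : ℝ} {bar : ℕ → Ω → ℝ≥0∞} (hbar : ∀ n, Measurable (bar n))
    (t : ℝ≥0∞) : Measurable (gridStrat h bar t) := by
  unfold gridStrat
  split_ifs
  exacts [measurable_const, hbar _]

def IsBddMeasurable (X : ℝ≥0∞ → Ω → ℝ) : Prop :=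
  (∀ t, Measurable (X t)) ∧ ∃ M, ∀ t ω, |X t ω| ≤ M

theorem IsBddMeasurable.add_const {X : ℝ≥0∞ → Ω → ℝ} (hX : IsBddMeasurable X) (c : ℝ) :
    IsBddMeasurable fun t ω => X t ω + c := by
  obtain ⟨hXm, M, hM⟩ := hX
  exact ⟨fun t => (hXm t).add_const c, M + |c|,
    fun t ω => (abs_add_le _ _).trans (add_le_add_left (hM t ω) _)⟩

section Payoff

variable {μ : Measure Ω} {𝓕 : Filtration ℝ≥0∞ mΩ} {U : ℝ≥0∞ → ℝ≥0∞ → Ω → ℝ} {M : ℝ}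

theorem abs_X1v_le (hμ : ∀ ω, μ {ω} ≠ 0) (hUb : ∀ s t ω, |U s t ω| ≤ M) (t : ℝ≥0∞) (ω : Ω) :
    |X1v μ 𝓕 U t ω| ≤ M :=
  abs_ciInf_le_of_forall_abs_le fun _ => abs_condExp_le_of_forall_abs_le hμ (fun _ => hUb _ _ _) ω

theorem abs_Y1v_le (hμ : ∀ ω, μ {ω} ≠ 0) (hUb : ∀ s t ω, |U s t ω| ≤ M) (t : ℝ≥0∞) (ω : Ω) :
    |Y1v μ 𝓕 U t ω| ≤ M :=
  abs_ciSup_le_of_forall_abs_le fun _ => abs_condExp_le_of_forall_abs_le hμ (fun _ => hUb _ _ _) ω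

theorem condExp_le_Y1v (hμ : ∀ ω, μ {ω} ≠ 0) (hUb : ∀ s t ω, |U s t ω| ≤ M) {t : ℝ≥0∞}
    {σ : Ω → ℝ≥0∞} (hσ : σ ∈ STge 𝓕 fun _ => t) (ω : Ω) :
    μ[fun ω' => U (σ ω') t ω' | 𝓕 t] ω ≤ Y1v μ 𝓕 U t ω :=
  le_ciSup (f := fun σ' : STge 𝓕 (fun _ => t) => μ[fun ω' => U (σ'.1 ω') t ω' | 𝓕 t] ω)
    ⟨M, by
      rintro _ ⟨σ', rfl⟩
      exact (abs_le.1 (abs_condExp_le_of_forall_abs_le hμ (fun _ => hUb _ _ _) ω)).2⟩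
    ⟨σ, hσ⟩

section Countable

variable [Countable Ω]

theorem IsBddMeasurable.integrable_apply [IsFiniteMeasure μ] {X : ℝ≥0∞ → Ω → ℝ}
    (hX : IsBddMeasurable X) {p : Ω → ℝ≥0∞} (hp : Measurable p) :
    Integrable (fun ω => X (p ω) ω) μ := by
  obtain ⟨hXm, M, hM⟩ := hX
  exact .of_bound (measurable_apply_of_countable_domain hp hXm).aestronglyMeasurable M
    (ae_of_all _ fun ω => (Real.norm_eq_abs _).trans_le (hM _ _))

theorem isBddMeasurable_U_apply (hUb : ∀ s t ω, |U s t ω| ≤ M) (hUm : ∀ s t, Measurable (U s t))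
    {p q : ℝ≥0∞ → Ω → ℝ≥0∞} (hp : ∀ t, Measurable (p t)) (hq : ∀ t, Measurable (q t)) :
    IsBddMeasurable fun t ω => U (p t ω) (q t ω) ω :=
  ⟨fun t => measurable_apply_of_countable_domain ((hp t).prodMk (hq t))
    (F := fun st => U st.1 st.2) fun st => hUm st.1 st.2, M, fun _ _ => hUb _ _ _⟩

theorem isBddMeasurable_X1v (hμ : ∀ ω, μ {ω} ≠ 0) (hUb : ∀ s t ω, |U s t ω| ≤ M) :
    IsBddMeasurable (X1v μ 𝓕 U) :=
  ⟨fun t => (measurable_iInf_of_countable_domain (m := 𝓕 t) fun _ =>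
    stronglyMeasurable_condExp.measurable).mono (𝓕.le t) le_rfl, M, abs_X1v_le hμ hUb⟩

theorem isBddMeasurable_Y1v (hμ : ∀ ω, μ {ω} ≠ 0) (hUb : ∀ s t ω, |U s t ω| ≤ M) :
    IsBddMeasurable (Y1v μ 𝓕 U) :=
  ⟨fun t => (measurable_iSup_of_countable_domain (m := 𝓕 t) fun _ =>
    stronglyMeasurable_condExp.measurable).mono (𝓕.le t) le_rfl, M, abs_Y1v_le hμ hUb⟩

theorem condExp_le_Y1v_of_isTT [IsFiniteMeasure μ] (hμ : ∀ ω, μ {ω} ≠ 0)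
    (hUb : ∀ s t ω, |U s t ω| ≤ M) (hUm : ∀ s t, Measurable (U s t)) {τ : Ω → ℝ≥0∞}
    (hτ : IsStoppingTime 𝓕 fun ω => (τ ω : WithTop ℝ≥0∞)) {φ : ℝ≥0∞ → Ω → ℝ≥0∞}
    (hφ : IsTT 𝓕 φ) :
    ∀ᵐ ω ∂μ, τ ω ≠ ∞ →
      μ[fun ω' => U (φ (τ ω') ω') (τ ω') ω' | hτ.measurableSpace] ω ≤ Y1v μ 𝓕 U (τ ω) ω := by
  have hY' : IsBddMeasurable fun t ω => U (φ t ω) t ω :=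
    isBddMeasurable_U_apply hUb hUm (fun t => hφ.1.comp measurable_prodMk_left)
      fun _ => measurable_const
  have hlocal : ∀ t ∈ range τ, ∀ᵐ ω ∂μ, τ ω = t → t ≠ ∞ →
      μ[fun ω' => U (φ (τ ω') ω') (τ ω') ω' | hτ.measurableSpace] ω ≤ Y1v μ 𝓕 U t ω := by
    -- on `{τ = t}` conditioning on `𝓕_τ` is conditioning on `𝓕_t`, as `τ` has countable range
    rintro t -
    by_cases ht : t = ∞
    · exact ae_of_all _ fun _ _ h => absurd ht h
    have hs : MeasurableSet[𝓕 t] {ω | τ ω = t} := by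
      simpa only [WithTop.coe_eq_coe] using
        hτ.measurableSet_eq_of_countable_range (countable_range _) t
    have hstop : μ[fun ω' => U (φ (τ ω') ω') (τ ω') ω' | hτ.measurableSpace]
        =ᵐ[μ.restrict {ω | τ ω = t}] μ[fun ω' => U (φ (τ ω') ω') (τ ω') ω' | 𝓕 t] := by
      simpa only [WithTop.coe_eq_coe] using
        condExp_stopping_time_ae_eq_restrict_eq_of_countable_range hτ (countable_range _) t
    have hfreeze : μ[fun ω' => U (φ (τ ω') ω') (τ ω') ω' | 𝓕 t]
        =ᵐ[μ.restrict {ω | τ ω = t}] μ[fun ω' => U (φ t ω') t ω' | 𝓕 t] :=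
      condExp_ae_eq_restrict_of_eqOn (𝓕.le t) hs
        (hY'.integrable_apply (measurable_of_isStoppingTime hτ))
        (hY'.integrable_apply measurable_const) fun ω (hω : τ ω = t) => by simp only [hω]
    refine (ae_restrict_iff' (𝓕.le t _ hs)).1 ?_
    filter_upwards [hstop, hfreeze] with ω h1 h2 _
    rw [h1, h2]
    obtain ⟨hφt, hφgt⟩ := hφ.2 t ht
    exact condExp_le_Y1v hμ hUb ⟨hφt, fun ω => (hφgt ω).le⟩ ω
  filter_upwards [(ae_ball_iff (countable_range τ)).2 hlocal] with ω hω
  exact hω _ ⟨ω, rfl⟩ rfl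

theorem integrable_dynkinKernel [IsFiniteMeasure μ] {X Y Z : ℝ≥0∞ → Ω → ℝ}
    (hX : IsBddMeasurable X) (hY : IsBddMeasurable Y) (hZ : IsBddMeasurable Z)
    {ρ₀ τ₀ : Ω → ℝ≥0∞} (hρ₀ : Measurable ρ₀) (hτ₀ : Measurable τ₀) :
    Integrable (dynkinKernel X Y Z ρ₀ τ₀) μ := by
  rw [dynkinKernel_eq_indicator]
  exact (((hX.integrable_apply hρ₀).indicator (measurableSet_lt hρ₀ hτ₀)).add
    ((hY.integrable_apply hτ₀).indicator (measurableSet_lt hτ₀ hρ₀))).add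
    ((hZ.integrable_apply hρ₀).indicator (measurableSet_eq_fun hρ₀ hτ₀))

theorem condExp_dynkinKernel_add_const_ae_le [IsFiniteMeasure μ] {σ : Ω → ℝ≥0∞}
    (hσ : IsStoppingTime 𝓕 fun ω => (σ ω : WithTop ℝ≥0∞)) {X Y Z : ℝ≥0∞ → Ω → ℝ}
    (hX : IsBddMeasurable X) (hY : IsBddMeasurable Y) (hZ : IsBddMeasurable Z)
    {ρ₀ τ₀ : Ω → ℝ≥0∞} (hρ₀ : Measurable ρ₀) (hτ₀ : Measurable τ₀) {δ : ℝ} (hδ : 0 ≤ δ) :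
    ∀ᵐ ω ∂μ, condDynkin μ hσ.measurableSpace (fun t ω => X t ω + δ) Y Z ρ₀ τ₀ ω ≤
      condDynkin μ hσ.measurableSpace X Y Z ρ₀ τ₀ ω + δ := by
  have hK : Integrable (dynkinKernel X Y Z ρ₀ τ₀) μ := integrable_dynkinKernel hX hY hZ hρ₀ hτ₀
  filter_upwards [condExp_mono (m := hσ.measurableSpace)
      (integrable_dynkinKernel (hX.add_const δ) hY hZ hρ₀ hτ₀) (hK.add (integrable_const δ))
      (ae_of_all _ (dynkinKernel_add_const_le X Y Z hδ ρ₀ τ₀)),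
    condExp_add hK (integrable_const δ) hσ.measurableSpace] with ω hmono hadd
  rwa [hadd, Pi.add_apply, condExp_const hσ.measurableSpace_le] at hmono

theorem condDynkin_ae_le_of_condExp_le [IsFiniteMeasure μ] {σ ρ₀ τ₀ : Ω → ℝ≥0∞}
    (hσ : IsStoppingTime 𝓕 fun ω => (σ ω : WithTop ℝ≥0∞))
    (hρ₀ : IsStoppingTime 𝓕 fun ω => (ρ₀ ω : WithTop ℝ≥0∞))
    (hτ₀ : IsStoppingTime 𝓕 fun ω => (τ₀ ω : WithTop ℝ≥0∞)) (hσρ : ∀ ω, σ ω ≤ ρ₀ ω)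
    (hστ : ∀ ω, σ ω ≤ τ₀ ω) {X X' Y Y' Z : ℝ≥0∞ → Ω → ℝ} (hX : IsBddMeasurable X)
    (hX' : IsBddMeasurable X') (hY : IsBddMeasurable Y) (hY' : IsBddMeasurable Y')
    (hZ : IsBddMeasurable Z)
    (hXX' : ∀ᵐ ω ∂μ, ρ₀ ω < τ₀ ω →
      μ[fun ω' => X' (ρ₀ ω') ω' | hρ₀.measurableSpace] ω ≤ X (ρ₀ ω) ω)
    (hYY' : ∀ᵐ ω ∂μ, τ₀ ω < ρ₀ ω →
      μ[fun ω' => Y' (τ₀ ω') ω' | hτ₀.measurableSpace] ω ≤ Y (τ₀ ω) ω) :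
    ∀ᵐ ω ∂μ, condDynkin μ hσ.measurableSpace X' Y' Z ρ₀ τ₀ ω ≤
      condDynkin μ hσ.measurableSpace X Y Z ρ₀ τ₀ ω := by
  have hmρ := hσ.measurableSpace_mono hρ₀ fun ω => WithTop.coe_le_coe.2 (hσρ ω)
  have hmτ := hσ.measurableSpace_mono hτ₀ fun ω => WithTop.coe_le_coe.2 (hστ ω)
  have hρm := measurable_of_isStoppingTime hρ₀
  have hτm := measurable_of_isStoppingTime hτ₀
  have hC := measurableSet_eq_fun hρm hτm
  have iXA := (hX.integrable_apply (μ := μ) hρm).indicator (measurableSet_lt hρm hτm)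
  have iX'A := (hX'.integrable_apply (μ := μ) hρm).indicator (measurableSet_lt hρm hτm)
  have iYB := (hY.integrable_apply (μ := μ) hτm).indicator (measurableSet_lt hτm hρm)
  have iY'B := (hY'.integrable_apply (μ := μ) hτm).indicator (measurableSet_lt hτm hρm)
  have iZC := (hZ.integrable_apply (μ := μ) hρm).indicator hC
  unfold condDynkin
  rw [dynkinKernel_eq_indicator X' Y' Z, dynkinKernel_eq_indicator X Y Z]
  filter_upwards [condExp_add (iX'A.add iY'B) iZC hσ.measurableSpace,
    condExp_add iX'A iY'B hσ.measurableSpace, condExp_add (iXA.add iYB) iZC hσ.measurableSpace,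
    condExp_add iXA iYB hσ.measurableSpace,
    condExp_indicator_ae_le hmρ hρ₀.measurableSpace_le (measurableSet_lt_of_isStoppingTime hρ₀ hτ₀)
      (hX'.integrable_apply hρm) (hX.integrable_apply hρm) hXX',
    condExp_indicator_ae_le hmτ hτ₀.measurableSpace_le (measurableSet_lt_of_isStoppingTime hτ₀ hρ₀)
      (hY'.integrable_apply hτm) (hY.integrable_apply hτm) hYY'] with ω h1 h2 h3 h4 hcmpA hcmpB
  simp only [Pi.add_apply] at h1 h2 h3 h4
  rw [h1, h2, h3, h4]
  linarith

theorem condPayoff_ae_le_condDynkin_add [IsFiniteMeasure μ] (hμ : ∀ ω, μ {ω} ≠ 0)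
    (hUb : ∀ s t ω, |U s t ω| ≤ M) (hUm : ∀ s t, Measurable (U s t)) {σ : Ω → ℝ≥0∞}
    (hσ : IsStoppingTime 𝓕 fun ω => (σ ω : WithTop ℝ≥0∞))
    {ρ : (Ω → ℝ≥0∞) × (ℝ≥0∞ → Ω → ℝ≥0∞)} (hρ : IsStrategyGe 𝓕 σ ρ) {τ₀ : Ω → ℝ≥0∞}
    (hτ₀ : τ₀ ∈ STge 𝓕 σ) {ψ : ℝ≥0∞ → Ω → ℝ≥0∞} (hψ : ∀ t, Measurable (ψ t)) {δ : ℝ}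
    (hδ : 0 ≤ δ)
    (happrox : ∀ᵐ ω ∂μ, μ[fun ω' => U (ρ.1 ω') (evalAt ψ ρ.1 ω') ω' | hρ.1.1.measurableSpace] ω
      - δ < X1v μ 𝓕 U (ρ.1 ω) ω) :
    ∀ᵐ ω ∂μ, condPayoff μ hσ.measurableSpace U ρ (τ₀, ψ) ω ≤
      condDynkin μ hσ.measurableSpace (X1v μ 𝓕 U) (Y1v μ 𝓕 U) (Zv U) ρ.1 τ₀ ω + δ := by
  obtain ⟨⟨hρ₀, hρ₁⟩, hσρ⟩ := hρ
  have hX := isBddMeasurable_X1v (𝓕 := 𝓕) hμ hUb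
  have hY := isBddMeasurable_Y1v (𝓕 := 𝓕) hμ hUb
  have hZ : IsBddMeasurable (Zv U) :=
    isBddMeasurable_U_apply (p := fun t _ => t) (q := fun t _ => t) hUb hUm
      (fun _ => measurable_const) fun _ => measurable_const
  have hmono := condDynkin_ae_le_of_condExp_le hσ
    (X := fun t ω => X1v μ 𝓕 U t ω + δ) (X' := fun s ω => U s (ψ s ω) ω) (Y := Y1v μ 𝓕 U)
    (Y' := fun t ω => U (ρ.2 t ω) t ω) hρ₀ hτ₀.1 hσρ hτ₀.2 (hX.add_const δ)
    (isBddMeasurable_U_apply hUb hUm (fun _ => measurable_const) hψ) hY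
    (isBddMeasurable_U_apply hUb hUm (fun t => hρ₁.1.comp measurable_prodMk_left)
      fun _ => measurable_const) hZ
    (happrox.mono fun ω h _ => (sub_lt_iff_lt_add.1 h).le)
    ((condExp_le_Y1v_of_isTT hμ hUb hUm hτ₀.1 hρ₁).mono fun ω h hlt => h (hlt.trans_le le_top).ne)
  filter_upwards [hmono, condExp_dynkinKernel_add_const_ae_le hσ hX hY hZ
    (measurable_of_isStoppingTime hρ₀) (measurable_of_isStoppingTime hτ₀.1) hδ] with ω h1 h2
  rw [condPayoff, U_play_eq_dynkinKernel]
  exact h1.trans h2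

end Countable

end Payoff

theorem subgame_upper_bound_general [Countable Ω] (μ : Measure Ω) [IsProbabilityMeasure μ]
    (𝓕 : Filtration ℝ≥0∞ mΩ) (hsetup : UsualSetup μ 𝓕)
    (U : ℝ≥0∞ → ℝ≥0∞ → Ω → ℝ) (r : ℝ≥0∞ → ℝ) (hU : PayoffAssumption 𝓕 U r)
    (ε h : ℝ) (hε : 0 < ε)
    (σ : Ω → ℝ≥0∞) (hσ : IsStoppingTime 𝓕 (fun ω => (σ ω : WithTop ℝ≥0∞)))
    (τbar : ℕ → Ω → ℝ≥0∞) (hτopt : IsOptTau1 μ 𝓕 U ε h τbar)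
    (happroxX : ∀ (ρ₀ : Ω → ℝ≥0∞) (hρ₀ : IsStoppingTime 𝓕 (fun ω => (ρ₀ ω : WithTop ℝ≥0∞))),
      ∀ᵐ ω ∂μ,
        (μ[fun ω' => U (ρ₀ ω') (evalAt (gridStrat h τbar) ρ₀ ω') ω' |
          hρ₀.measurableSpace]) ω - 2*ε < X1v μ 𝓕 U (ρ₀ ω) ω)
    (ρσε τσε : Ω → ℝ≥0∞) (hρσε : ρσε ∈ STge 𝓕 σ) (hτσε : τσε ∈ STge 𝓕 σ)
    (hsaddle : ∀ ρ₀ τ₀ : Ω → ℝ≥0∞, ρ₀ ∈ STge 𝓕 σ → τ₀ ∈ STge 𝓕 σ →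
      ∀ᵐ ω ∂μ,
        condDynkin μ hσ.measurableSpace (X1v μ 𝓕 U) (Y1v μ 𝓕 U) (Zv U) ρ₀ τσε ω - ε ≤
          condDynkin μ hσ.measurableSpace (X1v μ 𝓕 U) (Y1v μ 𝓕 U) (Zv U) ρσε τσε ω ∧
        condDynkin μ hσ.measurableSpace (X1v μ 𝓕 U) (Y1v μ 𝓕 U) (Zv U) ρσε τσε ω ≤
          condDynkin μ hσ.measurableSpace (X1v μ 𝓕 U) (Y1v μ 𝓕 U) (Zv U) ρσε τ₀ ω + ε) :
    ∀ ρ : (Ω → ℝ≥0∞) × (ℝ≥0∞ → Ω → ℝ≥0∞), IsStrategyGe 𝓕 σ ρ →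
      ∀ᵐ ω ∂μ,
        condPayoff μ hσ.measurableSpace U ρ (τσε, gridStrat h τbar) ω ≤
          (⨆ ρ₀ : STge 𝓕 σ, ⨅ τ₀ : STge 𝓕 σ,
            condDynkin μ hσ.measurableSpace (X1v μ 𝓕 U) (Y1v μ 𝓕 U) (Zv U)
              ρ₀.1 τ₀.1 ω) + 4*ε := by
  intro ρ hρ
  obtain ⟨M, hUb⟩ := hU.1
  have hUm : ∀ s t, Measurable (U s t) := fun s t => (hU.2.1 s t).mono (𝓕.le _) le_rfl
  have hpayoff := condPayoff_ae_le_condDynkin_add hsetup.1 hUb hUm hσ hρ hτσε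
    (measurable_gridStrat fun n => measurable_of_isStoppingTime (hτopt n).1.1)
    (by positivity : (0 : ℝ) ≤ 2 * ε) (happroxX ρ.1 hρ.1.1)
  have hsaddle' (i j : STge 𝓕 σ) :=
    forall_of_ae_of_measure_singleton_ne_zero hsetup.1 (hsaddle i.1 j.1 i.2 j.2)
  filter_upwards [hpayoff] with ω hω
  have hvalue := le_ciSup_ciInf_add_of_saddle
    (V := fun i j : STge 𝓕 σ =>
      condDynkin μ hσ.measurableSpace (X1v μ 𝓕 U) (Y1v μ 𝓕 U) (Zv U) i.1 j.1 ω)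
    (fun i j => abs_condExp_le_of_forall_abs_le hsetup.1
      (abs_dynkinKernel_le (abs_X1v_le hsetup.1 hUb) (abs_Y1v_le hsetup.1 hUb)
        (fun _ _ => hUb _ _ _) i.1 j.1) ω)
    (a := ⟨ρσε, hρσε⟩) (b := ⟨τσε, hτσε⟩) (fun i => (hsaddle' i ⟨τσε, hτσε⟩ ω).1)
    (fun j => (hsaddle' ⟨ρσε, hρσε⟩ j ω).2) ⟨ρ.1, hρ.1.1, hρ.2⟩
  linarith

/-- last display of Remark 3.4: in the zero-sum sub-game at a stopping time
`σ`, for every stopping strategy `ρ ∈ 𝔗_σ`, a.s.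
`E[U(ρ[τ_σ^ε], τ_σ^ε[ρ]) | 𝓕_σ] ≤ v_σ + 4ε`, where `τ_σ^ε = (τ_σ^ε, τ_h)`. -/
theorem subgame_upper_bound [Countable Ω] (μ : Measure Ω) [IsProbabilityMeasure μ]
    (𝓕 : Filtration ℝ≥0∞ mΩ) (hsetup : UsualSetup μ 𝓕)
    (U : ℝ≥0∞ → ℝ≥0∞ → Ω → ℝ) (r : ℝ≥0∞ → ℝ) (hU : PayoffAssumption 𝓕 U r)
    (ε h : ℝ) (hε : 0 < ε) (hh : 0 < h)
    (σ : Ω → ℝ≥0∞) (hσ : IsStoppingTime 𝓕 (fun ω => (σ ω : WithTop ℝ≥0∞)))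
    (τbar : ℕ → Ω → ℝ≥0∞) (hτopt : IsOptTau1 μ 𝓕 U ε h τbar)
    (happroxX : ∀ (ρ₀ : Ω → ℝ≥0∞) (hρ₀ : IsStoppingTime 𝓕 (fun ω => (ρ₀ ω : WithTop ℝ≥0∞))),
      ∀ᵐ ω ∂μ,
        (μ[fun ω' => U (ρ₀ ω') (evalAt (gridStrat h τbar) ρ₀ ω') ω' |
          hρ₀.measurableSpace]) ω - 2*ε < X1v μ 𝓕 U (ρ₀ ω) ω)
    (ρσε τσε : Ω → ℝ≥0∞) (hρσε : ρσε ∈ STge 𝓕 σ) (hτσε : τσε ∈ STge 𝓕 σ)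
    (hsaddle : ∀ ρ₀ τ₀ : Ω → ℝ≥0∞, ρ₀ ∈ STge 𝓕 σ → τ₀ ∈ STge 𝓕 σ →
      ∀ᵐ ω ∂μ,
        condDynkin μ hσ.measurableSpace (X1v μ 𝓕 U) (Y1v μ 𝓕 U) (Zv U) ρ₀ τσε ω - ε ≤
          condDynkin μ hσ.measurableSpace (X1v μ 𝓕 U) (Y1v μ 𝓕 U) (Zv U) ρσε τσε ω ∧
        condDynkin μ hσ.measurableSpace (X1v μ 𝓕 U) (Y1v μ 𝓕 U) (Zv U) ρσε τσε ω ≤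
          condDynkin μ hσ.measurableSpace (X1v μ 𝓕 U) (Y1v μ 𝓕 U) (Zv U) ρσε τ₀ ω + ε) :
    ∀ ρ : (Ω → ℝ≥0∞) × (ℝ≥0∞ → Ω → ℝ≥0∞), IsStrategyGe 𝓕 σ ρ →
      ∀ᵐ ω ∂μ,
        condPayoff μ hσ.measurableSpace U ρ (τσε, gridStrat h τbar) ω ≤
          (⨆ ρ₀ : STge 𝓕 σ, ⨅ τ₀ : STge 𝓕 σ,
            condDynkin μ hσ.measurableSpace (X1v μ 𝓕 U) (Y1v μ 𝓕 U) (Zv U)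
              ρ₀.1 τ₀.1 ω) + 4*ε :=
  subgame_upper_bound_general μ 𝓕 hsetup U r hU ε h hε σ hσ τbar hτopt happroxX ρσε τσε hρσε hτσε
    hsaddle

end StoppingGames
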